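/- arXiv:math/0211043 — 4 statements merged into one kernel-verified Lean document; each statement's English description precedes it below -/
import Mathlib

section
/- If B is an orthonormal set of vectors in a Hilbert space H, X is a finite-dimensional linear subspace of H, and 0 < δ such that for every b ∈ B there exists x ∈ X with ‖b - x‖ < δ, then dim X ≥ (1 - δ²) · card(B). -/
/-!
Let `P` be the orthogonal projection onto `X`. Each `b ∈ B` is a unit vector within `δ` of `X`,
so by Pythagoras `‖P b‖² ≥ 1 - δ²`. On the other hand, expanding `‖P b‖²` in an orthonormal basis
`e₁, …, eₙ` of `X` and applying Bessel's inequality to each `eⱼ` against the orthonormal set `B`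
gives `∑_{b ∈ B} ‖P b‖² = ∑ⱼ ∑_{b ∈ B} |⟪eⱼ, b⟫|² ≤ n`.
-/

open Module

section

variable {𝕜 E : Type*} [RCLike 𝕜] [NormedAddCommGroup E] [InnerProductSpace 𝕜 E]

local notation "⟪" x ", " y "⟫" => inner 𝕜 x y

namespace Submodule

theorem norm_sq_sub_norm_sub_sq_le_norm_starProjection_sq (K : Submodule 𝕜 E)
    [K.HasOrthogonalProjection] (v : E) {x : E} (hx : x ∈ K) :
    ‖v‖ ^ 2 - ‖v - x‖ ^ 2 ≤ ‖K.starProjection v‖ ^ 2 := by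
  have hmin : ‖v - K.starProjection v‖ ≤ ‖v - x‖ := by
    rw [starProjection_minimal]
    exact ciInf_le ⟨0, Set.forall_mem_range.mpr fun _ => norm_nonneg _⟩ (⟨x, hx⟩ : K)
  have hpyth := K.norm_sq_eq_add_norm_sq_starProjection v
  rw [starProjection_orthogonal_val] at hpyth
  nlinarith [norm_nonneg (v - K.starProjection v)]

theorem norm_starProjection_sq_eq_sum {ι : Type*} [Fintype ι] (K : Submodule 𝕜 E)
    [K.HasOrthogonalProjection] (e : OrthonormalBasis ι 𝕜 K) (v : E) :
    ‖K.starProjection v‖ ^ 2 = ∑ j, ‖⟪(e j : E), v⟫‖ ^ 2 := by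
  rw [starProjection_apply, norm_coe, ← e.sum_sq_norm_inner_right]
  simp only [inner_orthogonalProjectionOnto_eq_of_mem_left]

end Submodule

theorem Orthonormal.sum_norm_starProjection_sq_le_finrank {ι : Type*} {v : ι → E}
    (hv : Orthonormal 𝕜 v) (K : Submodule 𝕜 E) [FiniteDimensional 𝕜 K] (s : Finset ι) :
    ∑ i ∈ s, ‖K.starProjection (v i)‖ ^ 2 ≤ finrank 𝕜 K := by
  let e := stdOrthonormalBasis 𝕜 K
  have bessel (j) : ∑ i ∈ s, ‖⟪(e j : E), v i⟫‖ ^ 2 ≤ 1 := by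
    calc ∑ i ∈ s, ‖⟪(e j : E), v i⟫‖ ^ 2 = ∑ i ∈ s, ‖⟪v i, (e j : E)⟫‖ ^ 2 := by
          simp only [norm_inner_symm]
      _ ≤ ‖(e j : E)‖ ^ 2 := hv.sum_inner_products_le _
      _ = 1 := by rw [Submodule.norm_coe, e.orthonormal.1 j, one_pow]
  calc ∑ i ∈ s, ‖K.starProjection (v i)‖ ^ 2
      = ∑ j, ∑ i ∈ s, ‖⟪(e j : E), v i⟫‖ ^ 2 := by
        simp only [K.norm_starProjection_sq_eq_sum e]
        exact Finset.sum_comm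
    _ ≤ ∑ _j : Fin (finrank 𝕜 K), (1 : ℝ) := Finset.sum_le_sum fun j _ => bessel j
    _ = finrank 𝕜 K := by simp

end

theorem stmt_0_general {H : Type*} [NormedAddCommGroup H] [InnerProductSpace ℂ H]
    (B : Finset H) (hB : Orthonormal ℂ (fun b : (B : Set H) => (b : H)))
    (X : Submodule ℂ H) (hX : FiniteDimensional ℂ X)
    (δ : ℝ)
    (happrox : ∀ b ∈ B, ∃ x ∈ X, ‖b - x‖ < δ) :
    (1 - δ ^ 2) * (B.card : ℝ) ≤ (Module.finrank ℂ X : ℝ) := by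
  have near (b) (hb : b ∈ B) : 1 - δ ^ 2 ≤ ‖X.starProjection b‖ ^ 2 := by
    obtain ⟨x, hx, hbx⟩ := happrox b hb
    have hb1 : ‖b‖ = 1 := hB.1 ⟨b, hb⟩
    have := X.norm_sq_sub_norm_sub_sq_le_norm_starProjection_sq b hx
    nlinarith [pow_lt_pow_left₀ hbx (norm_nonneg _) two_ne_zero]
  calc (1 - δ ^ 2) * (B.card : ℝ) = ∑ _b ∈ B, (1 - δ ^ 2) := by
        rw [Finset.sum_const, nsmul_eq_mul, mul_comm]
    _ ≤ ∑ b ∈ B, ‖X.starProjection b‖ ^ 2 := Finset.sum_le_sum near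
    _ = ∑ b : (B : Set H), ‖X.starProjection b‖ ^ 2 := (Finset.sum_finset_coe _ B).symm
    _ ≤ finrank ℂ X := hB.sum_norm_starProjection_sq_le_finrank X Finset.univ

/-- If `B` is an orthonormal set of vectors in a Hilbert space `H`,
`X` is a finite-dimensional linear subspace of `H`, and `0 < δ` is such that every
`b ∈ B` is within distance `< δ` of some element of `X`, then
`dim X ≥ (1 - δ²) · card B`. -/
theorem stmt_0 {H : Type*} [NormedAddCommGroup H] [InnerProductSpace ℂ H]
    (B : Finset H) (hB : Orthonormal ℂ (fun b : (B : Set H) => (b : H)))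
    (X : Submodule ℂ H) (hX : FiniteDimensional ℂ X)
    (δ : ℝ) (hδ : 0 < δ)
    (happrox : ∀ b ∈ B, ∃ x ∈ X, ‖b - x‖ < δ) :
    (1 - δ ^ 2) * (B.card : ℝ) ≤ (Module.finrank ℂ X : ℝ) :=
  stmt_0_general B hB X hX δ happrox
end

section
/- Let L be a seminorm (possibly taking value +∞) on a unital C*-algebra A satisfying L(a*) = L(a) for all a. For states σ, ω on A, the supremum of |σ(a) - ω(a)| over {a : L(a) ≤ 1} equals the supremum of |σ(a) - ω(a)| over {a : L(a) ≤ 1 and a = a*}. -/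
open scoped ENNReal NNReal
open Complex ComplexConjugate NormedSpace Bornology

/-!
States are Hermitian, `σ (star a) = conj (σ a)`. Granting this, put `φ = σ - ω`, pick `|c| = 1`
with `c * φ a = ‖φ a‖`, and let `e = (c / 2) • a`: the self-adjoint element `e + star e` has
`L (e + star e) ≤ L a` and `φ (e + star e) = ‖φ a‖`, so both sets of values coincide.

Hermitianity needs care because `star` is not assumed conjugate-linear (`ℂ` with the trivial
star is a C*-ring). The central self-adjoint element `w = -(I • star (I • 1))` (equal to `-1` in
a `StarModule`) splits `a = (a (1 + w) + a (1 - w)) / 2`. On `A (1 - w)` star is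
conjugate-linear and the usual polarization argument applies. On `A (1 + w)` star is ℂ-linear,
so for skew-adjoint `d` there every `exp (s • d)`, `s : ℂ`, is unitary; Liouville's theorem
forces `d = 0`, so star is the identity on `A (1 + w)` and states are real there.
-/

section Algebraic

variable {A : Type*} [Ring A] [StarRing A] [Algebra ℂ A]

theorem star_smul_eq_star_mul (c : ℂ) (x : A) :
    star (c • x) = star x * star (c • (1 : A)) := by
  rw [← star_mul, smul_one_mul]

theorem commute_star_smul_one (c : ℂ) (x : A) : Commute (star (c • (1 : A))) x := by
  simpa using ((Commute.one_left (star x)).smul_left c).star_star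

theorem star_I_smul_one_mul_self : star (I • (1 : A)) * star (I • (1 : A)) = -1 := by
  rw [← star_mul, smul_mul_smul_comm, I_mul_I, one_mul, neg_smul, one_smul, star_neg, star_one]

variable (A) in
def starSign : A := -(I • star (I • (1 : A)))

theorem commute_starSign (x : A) : Commute (starSign A) x :=
  ((commute_star_smul_one I x).smul_left I).neg_left

theorem star_starSign : star (starSign A) = starSign A := by
  rw [starSign, star_neg, star_smul_eq_star_mul, star_star, smul_one_mul]

theorem one_add_starSign_mul_star_I_smul_one :
    (1 + starSign A) * star (I • (1 : A)) = I • (1 + starSign A) := by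
  rw [starSign, add_mul, neg_mul, smul_mul_assoc, star_I_smul_one_mul_self]
  simp only [one_mul, smul_add, smul_neg, smul_smul, I_mul_I, neg_smul, one_smul, neg_neg]
  abel

theorem one_sub_starSign_mul_star_I_smul_one :
    (1 - starSign A) * star (I • (1 : A)) = -(I • (1 - starSign A)) := by
  rw [starSign, sub_mul, neg_mul, smul_mul_assoc, star_I_smul_one_mul_self]
  simp only [one_mul, smul_sub, smul_neg, smul_smul, I_mul_I, neg_smul, one_smul, neg_neg]
  abel

theorem star_mul_one_add_starSign (x : A) :
    star (x * (1 + starSign A)) = star x * (1 + starSign A) := by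
  rw [star_mul, star_add, star_one, star_starSign]
  exact ((Commute.one_left (star x)).add_left (commute_starSign _)).eq

theorem star_mul_one_sub_starSign (x : A) :
    star (x * (1 - starSign A)) = star x * (1 - starSign A) := by
  rw [star_mul, star_sub, star_one, star_starSign]
  exact ((Commute.one_left (star x)).sub_left (commute_starSign _)).eq

theorem star_I_smul_mul_one_sub_starSign (x : A) :
    star (I • (x * (1 - starSign A))) = -(I • star (x * (1 - starSign A))) := by
  rw [star_smul_eq_star_mul, star_mul_one_sub_starSign, mul_assoc,
    one_sub_starSign_mul_star_I_smul_one, mul_neg, mul_smul_comm]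

theorem im_map_eq_zero_of_star_eq_self (f : A →ₗ[ℂ] ℂ)
    (hf : ∀ a, (f (star a * a)).im = 0) {x : A} (hx : star x = x) : (f x).im = 0 := by
  have hsq := hf (x + 1)
  have hone := hf 1
  have hx2 := hf x
  rw [star_add, star_one, hx, add_mul, mul_add, mul_add, one_mul, mul_one] at hsq
  rw [star_one, one_mul] at hone
  rw [hx] at hx2
  simp only [map_add, add_im, one_mul] at hsq
  linarith

theorem map_star_eq_conj_of_star_I_smul (f : A →ₗ[ℂ] ℂ)
    (hf : ∀ a, (f (star a * a)).im = 0) {y : A} (hy : star (I • y) = -(I • star y)) :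
    f (star y) = conj (f y) := by
  have hsum := im_map_eq_zero_of_star_eq_self f hf (x := y + star y)
    (by rw [star_add, star_star, add_comm])
  have hdiff := im_map_eq_zero_of_star_eq_self f hf (x := I • y + star (I • y))
    (by rw [star_add, star_star, add_comm])
  rw [hy, map_add, map_neg, map_smul, map_smul, smul_eq_mul, smul_eq_mul] at hdiff
  rw [map_add] at hsum
  apply Complex.ext <;>
    simp only [add_im, mul_im, I_re, I_im, neg_im, conj_re, conj_im, zero_mul, one_mul,
      zero_add] at hsum hdiff ⊢ <;>
    linarith

end Algebraic

section Normed

variable {A : Type*} [NormedRing A] [StarRing A] [NormedAlgebra ℂ A]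

theorem star_real_smul [ContinuousStar A] (r : ℝ) (x : A) : star (r • x) = r • star x :=
  map_real_smul (starAddEquiv (R := A)) continuous_star r x

theorem star_smul_one [ContinuousStar A] (c : ℂ) :
    star (c • (1 : A)) = c.re • (1 : A) + c.im • star (I • (1 : A)) := by
  have hc : c • (1 : A) = c.re • (1 : A) + c.im • (I • (1 : A)) := by
    rw [← coe_smul, ← coe_smul, smul_smul, ← add_smul, re_add_im]
  rw [hc, star_add, star_real_smul, star_real_smul, star_one]

theorem one_add_starSign_mul_star_smul_one [ContinuousStar A] (c : ℂ) :
    (1 + starSign A) * star (c • (1 : A)) = c • (1 + starSign A) := by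
  rw [star_smul_one, mul_add, mul_smul_comm, mul_smul_comm, mul_one,
    one_add_starSign_mul_star_I_smul_one, ← coe_smul c.im, smul_smul, ← coe_smul, ← add_smul,
    re_add_im]

theorem star_smul_mul_one_add_starSign [ContinuousStar A] (c : ℂ) (x : A) :
    star (c • (x * (1 + starSign A))) = c • star (x * (1 + starSign A)) := by
  rw [star_smul_eq_star_mul, star_mul_one_add_starSign, mul_assoc,
    one_add_starSign_mul_star_smul_one, mul_smul_comm]

theorem eq_zero_of_forall_star_smul_eq_neg [CStarRing A] [CompleteSpace A] {d : A}
    (hd : ∀ s : ℂ, star (s • d) = -(s • d)) : d = 0 := by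
  let _ : NormedAlgebra ℚ A := .restrictScalars ℚ ℂ A
  have hbdd : IsBounded (Set.range fun s : ℂ => exp (s • d)) := by
    refine (Metric.isBounded_sphere (x := (0 : A)) (r := ‖(1 : A)‖)).subset ?_
    rintro - ⟨s, rfl⟩
    have hU := exp_mem_unitary_of_mem_skewAdjoint (skewAdjoint.mem_iff.mpr (hd s))
    simpa using CStarRing.norm_mul_mem_unitary 1 hU
  have hdiff : Differentiable ℂ fun s : ℂ => exp (s • d) := fun s =>
    (hasDerivAt_exp_smul_const d s).differentiableAt
  have hconst : (fun s : ℂ => exp (s • d)) = fun _ => 1 := funext fun s => by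
    simpa using hdiff.apply_eq_apply_of_bounded hbdd s 0
  have hderiv := hasDerivAt_exp_smul_const d (0 : ℂ)
  rw [hconst] at hderiv
  simpa using hderiv.unique (hasDerivAt_const (0 : ℂ) (1 : A))

variable [CStarRing A] [CompleteSpace A]

theorem star_mul_one_add_starSign_eq_self (x : A) :
    star (x * (1 + starSign A)) = x * (1 + starSign A) := by
  have hd : ∀ s : ℂ, star (s • ((x - star x) * (1 + starSign A))) =
      -(s • ((x - star x) * (1 + starSign A))) := fun s => by
    rw [star_smul_mul_one_add_starSign, star_mul_one_add_starSign, star_sub, star_star,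
      ← neg_sub x, neg_mul, smul_neg]
  have h := eq_zero_of_forall_star_smul_eq_neg hd
  rw [sub_mul, sub_eq_zero] at h
  rw [star_mul_one_add_starSign, h]

theorem map_star_eq_conj (f : A →ₗ[ℂ] ℂ) (hf : ∀ a, (f (star a * a)).im = 0) (a : A) :
    f (star a) = conj (f a) := by
  have hplus : f (star (a * (1 + starSign A))) = conj (f (a * (1 + starSign A))) := by
    rw [star_mul_one_add_starSign_eq_self, eq_comm, conj_eq_iff_im]
    exact im_map_eq_zero_of_star_eq_self f hf (star_mul_one_add_starSign_eq_self a)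
  have hminus := map_star_eq_conj_of_star_I_smul f hf (star_I_smul_mul_one_sub_starSign a)
  have hsplit : a + a = a * (1 + starSign A) + a * (1 - starSign A) := by noncomm_ring
  have hdouble : f (star a) + f (star a) = conj (f a) + conj (f a) :=
    calc f (star a) + f (star a)
        = f (star (a * (1 + starSign A))) + f (star (a * (1 - starSign A))) := by
          rw [← map_add, ← star_add, hsplit, star_add, map_add]
      _ = conj (f a) + conj (f a) := by
          rw [hplus, hminus, ← map_add, ← map_add, ← hsplit, map_add, map_add]
  rw [← two_mul, ← two_mul] at hdouble
  exact mul_left_cancel₀ two_ne_zero hdouble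

end Normed

theorem exists_star_eq_self_norm_map_eq {E : Type*} [AddCommGroup E] [Module ℂ E]
    [StarAddMonoid E] (L : E → ℝ≥0∞) (hadd : ∀ a b : E, L (a + b) ≤ L a + L b)
    (hsmul : ∀ (c : ℂ) (a : E), L (c • a) = ‖c‖₊ * L a) (hstar : ∀ a : E, L (star a) = L a)
    (φ : E →ₗ[ℂ] ℂ) (hφ : ∀ a, φ (star a) = conj (φ a)) (a : E) :
    ∃ b, L b ≤ L a ∧ star b = b ∧ ‖φ b‖ = ‖φ a‖ := by
  obtain ⟨c, hc_norm, hc⟩ := exists_norm_eq_mul_self (φ a)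
  set e := (2⁻¹ * c) • a
  have hLe : L e = 2⁻¹ * L a := by
    have hnorm : ‖(2⁻¹ : ℂ) * c‖₊ = 2⁻¹ := by ext; simp [hc_norm]
    rw [hsmul, hnorm, ENNReal.coe_inv two_ne_zero, ENNReal.coe_ofNat]
  have hφe : φ e = ((2⁻¹ * ‖φ a‖ : ℝ) : ℂ) := by
    rw [map_smul, smul_eq_mul, mul_assoc, ← hc]
    push_cast; ring
  refine ⟨e + star e, ?_, by rw [star_add, star_star, add_comm], ?_⟩
  · calc L (e + star e) ≤ L e + L e := (hadd e (star e)).trans_eq (by rw [hstar])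
      _ = L a := by rw [hLe, ← add_mul, ENNReal.inv_two_add_inv_two, one_mul]
  · rw [map_add, hφ, hφe, conj_ofReal, ← ofReal_add, norm_real,
      Real.norm_of_nonneg (by positivity)]
    ring

theorem stmt_1_general {A : Type*} [NormedRing A] [StarRing A] [CStarRing A]
    [NormedAlgebra ℂ A] [CompleteSpace A]
    (L : A → ℝ≥0∞)
    (hadd : ∀ a b : A, L (a + b) ≤ L a + L b)
    (hsmul : ∀ (c : ℂ) (a : A), L (c • a) = ‖c‖₊ * L a)
    (hstar : ∀ a : A, L (star a) = L a)
    (σ ω : A →ₗ[ℂ] ℂ)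
    (hσpos : ∀ a : A, 0 ≤ (σ (star a * a)).re ∧ (σ (star a * a)).im = 0)
    (hωpos : ∀ a : A, 0 ≤ (ω (star a * a)).re ∧ (ω (star a * a)).im = 0) :
    sSup {x : ℝ | ∃ a : A, L a ≤ 1 ∧ x = ‖σ a - ω a‖} =
      sSup {x : ℝ | ∃ a : A, L a ≤ 1 ∧ star a = a ∧ x = ‖σ a - ω a‖} := by
  have hφ (a : A) : (σ - ω) (star a) = conj ((σ - ω) a) := by
    rw [LinearMap.sub_apply, LinearMap.sub_apply, map_sub,
      map_star_eq_conj σ (fun a => (hσpos a).2), map_star_eq_conj ω (fun a => (hωpos a).2)]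
  congr 1
  ext x
  constructor
  · rintro ⟨a, hLa, rfl⟩
    obtain ⟨b, hLb, hb, hφb⟩ :=
      exists_star_eq_self_norm_map_eq L hadd hsmul hstar (σ - ω) hφ a
    exact ⟨b, hLb.trans hLa, hb, hφb.symm⟩
  · rintro ⟨a, hLa, -, rfl⟩
    exact ⟨a, hLa, rfl⟩

/-- For an adjoint-invariant seminorm `L` (possibly taking the
value `+∞`) on a unital C*-algebra `A` and states `σ, ω` on `A`, the supremum of
`|σ(a) - ω(a)|` over `{a : L a ≤ 1}` equals the supremum over
`{a : L a ≤ 1 and a = a*}`. -/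
theorem stmt_1 {A : Type*} [NormedRing A] [StarRing A] [CStarRing A]
    [NormedAlgebra ℂ A] [CompleteSpace A]
    (L : A → ℝ≥0∞)
    (hadd : ∀ a b : A, L (a + b) ≤ L a + L b)
    (hsmul : ∀ (c : ℂ) (a : A), L (c • a) = ‖c‖₊ * L a)
    (hstar : ∀ a : A, L (star a) = L a)
    (σ ω : A →ₗ[ℂ] ℂ)
    (hσ1 : σ 1 = 1)
    (hσpos : ∀ a : A, 0 ≤ (σ (star a * a)).re ∧ (σ (star a * a)).im = 0)
    (hω1 : ω 1 = 1)
    (hωpos : ∀ a : A, 0 ≤ (ω (star a * a)).re ∧ (ω (star a * a)).im = 0) :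
    sSup {x : ℝ | ∃ a : A, L a ≤ 1 ∧ x = ‖σ a - ω a‖} =
      sSup {x : ℝ | ∃ a : A, L a ≤ 1 ∧ star a = a ∧ x = ‖σ a - ω a‖} :=
  stmt_1_general L hadd hsmul hstar σ ω hσpos hωpos
end

section
/- Let A and B be unital C*-algebras with Leibniz cLip-norms, α ∈ Aut(A), β ∈ Aut(B) bi-Lipschitz, φ : A → B a surjective unital *-homomorphism with φ∘α = β∘φ, and suppose ψ : B → A is a positive C*-norm contractive Lipschitz linear map with φ∘ψ = id_B. Then for every finite Ω ⊆ {b ∈ B : L_B(b) < ∞, ‖b‖ ≤ 1} and δ > 0 and n ≥ 1, D(Ω·β(Ω)⋯β^{n-1}(Ω), δ) ≤ D(ψ(Ω)·α(ψ(Ω))⋯α^{n-1}(ψ(Ω)), δ); consequently Entp_{L_B}(β) ≤ Entp_{L_A}(α). -/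
open scoped ENNReal

/-- `apxDimE Z δ`: the minimal dimension (in `ℝ≥0∞`) of a finite-dimensional
linear subspace approximately containing `Z` to within `δ`. -/
noncomputable def apxDimE {E : Type*} [NormedAddCommGroup E] [Module ℂ E]
    (Z : Set E) (δ : ℝ) : ℝ≥0∞ :=
  sInf {c : ℝ≥0∞ | ∃ Y : Submodule ℂ E, FiniteDimensional ℂ Y ∧
    c = (Module.finrank ℂ Y : ℝ≥0∞) ∧ ∀ z ∈ Z, ∃ y ∈ Y, ‖z - y‖ < δ}

/-- The set of products `a₀ · α(a₁) · α²(a₂) ⋯ α^{n-1}(a_{n-1})` with all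
`aᵢ ∈ Ω`. -/
def prodSet {A : Type*} [Monoid A] (α : A → A) (Ω : Set A) (n : ℕ) : Set A :=
  {x | ∃ a : Fin n → A, (∀ i, a i ∈ Ω) ∧
    x = (List.ofFn fun i : Fin n => α^[(i : ℕ)] (a i)).prod}

/-- The product entropy `Entp_L(α)`:
`sup_{Ω, δ} limsup_n (1/n) log D(Ω·α(Ω)⋯α^{n-1}(Ω), δ)`, the supremum being over
finite subsets `Ω` of `{a : L a < ∞, ‖a‖ ≤ 1}` and `δ > 0`. -/
noncomputable def entp {A : Type*} [NormedRing A] [NormedAlgebra ℂ A]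
    (L : A → ℝ≥0∞) (α : A → A) : EReal :=
  ⨆ (Ω : Finset A) (_ : ∀ a ∈ Ω, L a ≠ ⊤ ∧ ‖a‖ ≤ 1) (δ : ℝ) (_ : 0 < δ),
    Filter.limsup
      (fun n : ℕ => (((n : ℝ)⁻¹ : ℝ) : EReal) * ENNReal.log (apxDimE (prodSet α (↑Ω) n) δ))
      Filter.atTop

/-- A state on a unital C*-algebra: a unital positive linear functional. -/
def IsUState {A : Type*} [NormedRing A] [StarRing A] [NormedAlgebra ℂ A]
    (σ : A →ₗ[ℂ] ℂ) : Prop :=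
  σ 1 = 1 ∧ ∀ a : A, 0 ≤ (σ (star a * a)).re ∧ (σ (star a * a)).im = 0

/-- A cLip-norm on a unital C*-algebra (characterization of Proposition 2.4). -/
structure IsCLipNorm {A : Type*} [NormedRing A] [StarRing A] [NormedAlgebra ℂ A]
    (L : A → ℝ≥0∞) : Prop where
  add_le : ∀ a b : A, L (a + b) ≤ L a + L b
  smul_eq : ∀ (c : ℂ) (a : A), L (c • a) = ‖c‖₊ * L a
  star_eq : ∀ a : A, L (star a) = L a
  eq_zero_iff : ∀ a : A, L a = 0 ↔ ∃ c : ℂ, a = c • (1 : A)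
  separates : ∀ σ ω : A →ₗ[ℂ] ℂ, IsUState σ → IsUState ω → σ ≠ ω →
      ∃ a : A, L a ≠ ⊤ ∧ σ a ≠ ω a
  bddDiff : ∃ M : ℝ, ∀ σ ω : A →ₗ[ℂ] ℂ, IsUState σ → IsUState ω →
      ∀ a : A, L a ≤ 1 → ‖σ a - ω a‖ ≤ M
  totBdd : TotallyBounded {a : A | L a ≤ 1 ∧ ‖a‖ ≤ 1}


/-
The approximating subspaces can be pushed forward along `φ`: a `*`-homomorphism between
C*-algebras is norm contractive, so `φ(Y)` approximates `φ(Z)` as well as `Y` approximates `Z`,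
and `dim φ(Y) ≤ dim Y`. Since `φ ∘ α = β ∘ φ` and `φ ∘ ψ = id`, `φ` maps
`ψ(Ω)·α(ψ(Ω))⋯α^{n-1}(ψ(Ω))` onto `Ω·β(Ω)⋯β^{n-1}(Ω)`, which gives the dimension inequality;
the entropy inequality follows by taking `ψ(Ω)`, admissible because `ψ` is contractive and
Lipschitz, as the competitor for `Ω` in the supremum.
-/

section CStarRing

variable {A : Type*} [NormedRing A] [StarRing A] [CStarRing A] [NormedAlgebra ℂ A]
  [CompleteSpace A]

-- Mathlib's `IsSelfAdjoint.spectralRadius_eq_nnnorm` is stated for `CStarAlgebra`, which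
-- also requires `StarModule ℂ A`.
theorem IsSelfAdjoint.spectralRadius_eq_nnnorm_of_cStarRing {a : A} (ha : IsSelfAdjoint a) :
    spectralRadius ℂ a = ‖a‖₊ := by
  refine tendsto_nhds_unique ?_
    (tendsto_const_nhds (x := (‖a‖₊ : ℝ≥0∞)) (f := Filter.atTop (α := ℕ)))
  convert (spectrum.pow_nnnorm_pow_one_div_tendsto_nhds_spectralRadius a).comp
      (tendsto_pow_atTop_atTop_of_one_lt (α := ℕ) one_lt_two) using 1
  funext n
  rw [Function.comp_apply, ha.nnnorm_pow_two_pow, ENNReal.coe_pow, ← ENNReal.rpow_natCast,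
    ← ENNReal.rpow_mul]
  simp

variable {B : Type*} [NormedRing B] [StarRing B] [CStarRing B] [NormedAlgebra ℂ B]
  [CompleteSpace B]

theorem StarAlgHom.nnnorm_map_le (φ : A →⋆ₐ[ℂ] B) (a : A) : ‖φ a‖₊ ≤ ‖a‖₊ := by
  have selfAdjoint_case {s : A} (hs : IsSelfAdjoint s) : ‖φ s‖₊ ≤ ‖s‖₊ := by
    have h : spectralRadius ℂ (φ s) ≤ spectralRadius ℂ s :=
      iSup_le_iSup_of_subset (AlgHom.spectrum_apply_subset φ.toAlgHom s)
    rwa [(hs.map φ).spectralRadius_eq_nnnorm_of_cStarRing,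
      hs.spectralRadius_eq_nnnorm_of_cStarRing, ENNReal.coe_le_coe] at h
  refine nonneg_le_nonneg_of_sq_le_sq zero_le ?_
  simp_rw [← CStarRing.nnnorm_star_mul_self, ← map_star, ← map_mul]
  exact selfAdjoint_case (.star_mul_self a)

theorem StarAlgHom.norm_map_le (φ : A →⋆ₐ[ℂ] B) (a : A) : ‖φ a‖ ≤ ‖a‖ := by
  exact_mod_cast φ.nnnorm_map_le a

end CStarRing

section ApxDim

variable {E F : Type*} [NormedAddCommGroup E] [Module ℂ E] [NormedAddCommGroup F] [Module ℂ F]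

theorem apxDimE_image_le (f : E →ₗ[ℂ] F) (hf : ∀ x, ‖f x‖ ≤ ‖x‖) (Z : Set E) (δ : ℝ) :
    apxDimE (f '' Z) δ ≤ apxDimE Z δ := by
  refine le_sInf ?_
  rintro _ ⟨Y, hY, rfl, happ⟩
  refine le_trans (b := (Module.finrank ℂ (Y.map f) : ℝ≥0∞))
    (sInf_le ⟨Y.map f, Module.Finite.map Y f, rfl, ?_⟩) ?_
  · rintro _ ⟨z, hz, rfl⟩
    obtain ⟨y, hy, hzy⟩ := happ z hz
    refine ⟨f y, Submodule.mem_map_of_mem hy, ?_⟩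
    calc ‖f z - f y‖ = ‖f (z - y)‖ := by rw [map_sub]
      _ ≤ ‖z - y‖ := hf _
      _ < δ := hzy
  · exact_mod_cast Submodule.finrank_map_le f Y

end ApxDim

theorem prodSet_image {M N : Type*} [Monoid M] [Monoid N] (f : M →* N) {α : M → M} {β : N → N}
    (h : Function.Semiconj f α β) (Ω : Set M) (n : ℕ) :
    f '' prodSet α Ω n = prodSet β (f '' Ω) n := by
  have map_prod (a : Fin n → M) : f (List.ofFn fun i : Fin n => α^[i] (a i)).prod =
      (List.ofFn fun i : Fin n => β^[i] (f (a i))).prod := by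
    simp only [map_list_prod, List.map_ofFn, Function.comp_def, (h.iterate_right _).eq]
  ext x
  constructor
  · rintro ⟨_, ⟨a, ha, rfl⟩, rfl⟩
    exact ⟨f ∘ a, fun i => ⟨a i, ha i, rfl⟩, map_prod a⟩
  · rintro ⟨b, hb, rfl⟩
    choose a ha hab using hb
    refine ⟨_, ⟨a, ha, rfl⟩, ?_⟩
    simp only [map_prod, hab]

theorem entp_le_of_forall_exists_apxDimE_le {A B : Type*} [NormedRing A] [NormedAlgebra ℂ A]
    [NormedRing B] [NormedAlgebra ℂ B] {LA : A → ℝ≥0∞} {LB : B → ℝ≥0∞} {α : A → A} {β : B → B}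
    (h : ∀ Ω : Finset B, (∀ b ∈ Ω, LB b ≠ ⊤ ∧ ‖b‖ ≤ 1) → ∃ Ω' : Finset A,
      (∀ a ∈ Ω', LA a ≠ ⊤ ∧ ‖a‖ ≤ 1) ∧
        ∀ δ n, apxDimE (prodSet β Ω n) δ ≤ apxDimE (prodSet α Ω' n) δ) :
    entp LB β ≤ entp LA α := by
  refine iSup₂_le fun Ω hΩ => iSup₂_le fun δ hδ => ?_
  obtain ⟨Ω', hΩ', hdim⟩ := h Ω hΩ
  refine le_trans ?_ (le_iSup₂_of_le Ω' hΩ' (le_iSup₂_of_le δ hδ le_rfl))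
  refine Filter.limsup_le_limsup (Filter.Eventually.of_forall fun n => ?_)
  exact mul_le_mul_of_nonneg_left (ENNReal.log_monotone (hdim δ n))
    (EReal.coe_nonneg.mpr (by positivity))

theorem apxDimE_prodSet_le_of_section {A B : Type*} [NormedRing A] [StarRing A] [CStarRing A]
    [NormedAlgebra ℂ A] [CompleteSpace A] [NormedRing B] [StarRing B] [CStarRing B]
    [NormedAlgebra ℂ B] [CompleteSpace B] (φ : A →⋆ₐ[ℂ] B) {α : A → A} {β : B → B}
    (hφ : Function.Semiconj φ α β) {ψ : B → A} (hψ : ∀ b, φ (ψ b) = b) (Ω : Set B) (δ : ℝ)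
    (n : ℕ) : apxDimE (prodSet β Ω n) δ ≤ apxDimE (prodSet α (ψ '' Ω) n) δ := by
  have hprod : prodSet β Ω n = φ.toLinearMap '' prodSet α (ψ '' Ω) n := by
    simpa [Set.image_image, hψ] using (prodSet_image (φ : A →* B) hφ (ψ '' Ω) n).symm
  rw [hprod]
  exact apxDimE_image_le φ.toLinearMap φ.norm_map_le _ δ

theorem stmt_16_general {A : Type*} [NormedRing A] [StarRing A] [CStarRing A]
    [NormedAlgebra ℂ A] [CompleteSpace A]
    {B : Type*} [NormedRing B] [StarRing B] [CStarRing B]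
    [NormedAlgebra ℂ B] [CompleteSpace B]
    (LA : A → ℝ≥0∞)
    (LB : B → ℝ≥0∞)
    (α : A ≃⋆ₐ[ℂ] A) (β : B ≃⋆ₐ[ℂ] B)
    (φ : A →⋆ₐ[ℂ] B)
    (hintertwine : ∀ a : A, φ (α a) = β (φ a))
    (ψ : B →ₗ[ℂ] A)
    (hψcontr : ∀ b : B, ‖ψ b‖ ≤ ‖b‖)
    (c : ℝ) (hψLip : ∀ b : B, LA (ψ b) ≤ ENNReal.ofReal c * LB b)
    (hψsec : ∀ b : B, φ (ψ b) = b) :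
    (∀ Ω : Finset B, (∀ b ∈ Ω, LB b ≠ ⊤ ∧ ‖b‖ ≤ 1) → ∀ δ : ℝ, 0 < δ →
        ∀ n : ℕ, 1 ≤ n →
          apxDimE (prodSet ⇑β (↑Ω) n) δ ≤
            apxDimE (prodSet ⇑α (⇑ψ '' ↑Ω) n) δ) ∧
    entp LB ⇑β ≤ entp LA ⇑α := by
  classical
  have key := apxDimE_prodSet_le_of_section φ (α := α) (β := β) hintertwine hψsec
  refine ⟨fun Ω _ δ _ n _ => key Ω δ n, entp_le_of_forall_exists_apxDimE_le fun Ω hΩ => ?_⟩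
  refine ⟨Ω.image ψ, Finset.forall_mem_image.mpr fun b hb => ⟨?_, (hψcontr b).trans (hΩ b hb).2⟩,
    fun δ n => by simpa using key Ω δ n⟩
  exact ne_top_of_le_ne_top (ENNReal.mul_ne_top ENNReal.ofReal_ne_top (hΩ b hb).1) (hψLip b)

/-- Let `A, B` be unital C*-algebras with Leibniz cLip-norms,
`α, β` bi-Lipschitz *-automorphisms, `φ : A → B` a surjective unital
*-homomorphism with `φ ∘ α = β ∘ φ`, and `ψ : B → A` a positive C*-norm
contractive Lipschitz linear map with `φ ∘ ψ = id`. Then for every finite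
`Ω ⊆ {b : L_B b < ∞, ‖b‖ ≤ 1}`, `δ > 0` and `n ≥ 1`,
`D(Ω·β(Ω)⋯β^{n-1}(Ω), δ) ≤ D(ψ(Ω)·α(ψ(Ω))⋯α^{n-1}(ψ(Ω)), δ)`; consequently
`Entp_{L_B}(β) ≤ Entp_{L_A}(α)`. -/
theorem stmt_16 {A : Type*} [NormedRing A] [StarRing A] [CStarRing A]
    [NormedAlgebra ℂ A] [CompleteSpace A] [PartialOrder A] [StarOrderedRing A]
    {B : Type*} [NormedRing B] [StarRing B] [CStarRing B]
    [NormedAlgebra ℂ B] [CompleteSpace B] [PartialOrder B] [StarOrderedRing B]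
    (LA : A → ℝ≥0∞) (hLA : IsCLipNorm LA)
    (hleibA : ∀ a b : A, LA (a * b) ≤ LA a * ‖b‖₊ + ‖a‖₊ * LA b)
    (LB : B → ℝ≥0∞) (hLB : IsCLipNorm LB)
    (hleibB : ∀ a b : B, LB (a * b) ≤ LB a * ‖b‖₊ + ‖a‖₊ * LB b)
    (α : A ≃⋆ₐ[ℂ] A) (β : B ≃⋆ₐ[ℂ] B)
    (lamA muA lamB muB : ℝ)
    (hαLip : ∀ a : A, LA (α a) ≤ ENNReal.ofReal lamA * LA a)
    (hαLip' : ∀ a : A, LA (α.symm a) ≤ ENNReal.ofReal muA * LA a)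
    (hβLip : ∀ b : B, LB (β b) ≤ ENNReal.ofReal lamB * LB b)
    (hβLip' : ∀ b : B, LB (β.symm b) ≤ ENNReal.ofReal muB * LB b)
    (φ : A →⋆ₐ[ℂ] B) (hφsurj : Function.Surjective φ)
    (hintertwine : ∀ a : A, φ (α a) = β (φ a))
    (hφind : ∀ b : B, LB b = ⨅ a : {a : A // φ a = b}, LA a.val)
    (ψ : B →ₗ[ℂ] A)
    (hψpos : ∀ b : B, 0 ≤ b → 0 ≤ ψ b)
    (hψcontr : ∀ b : B, ‖ψ b‖ ≤ ‖b‖)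
    (c : ℝ) (hψLip : ∀ b : B, LA (ψ b) ≤ ENNReal.ofReal c * LB b)
    (hψsec : ∀ b : B, φ (ψ b) = b) :
    (∀ Ω : Finset B, (∀ b ∈ Ω, LB b ≠ ⊤ ∧ ‖b‖ ≤ 1) → ∀ δ : ℝ, 0 < δ →
        ∀ n : ℕ, 1 ≤ n →
          apxDimE (prodSet ⇑β (↑Ω) n) δ ≤
            apxDimE (prodSet ⇑α (⇑ψ '' ↑Ω) n) δ) ∧
    entp LB ⇑β ≤ entp LA ⇑α :=
  stmt_16_general LA LB α β φ hintertwine ψ hψcontr c hψLip hψsec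
end

section
/- Let A and B be unital C*-algebras with cLip-norms L_A, L_B, and let L be a cLip-norm on A ⊕ B inducing L_A and L_B via the coordinate projections (i.e., L_A(a) = inf{L(x) : x ∈ A⊕B, π_A(x) = a} and similarly for L_B). Then for all δ > 0, D(𝓛^{A⊕B}_1, δ) ≤ D(𝓛^A_1, δ) + D(𝓛^B_1, δ), where 𝓛^X_1 = {x : L_X(x) ≤ 1}. Consequently Mdim_L(A ⊕ B) = max(Mdim_{L_A}(A), Mdim_{L_B}(B)), where Mdim_L(A) = limsup_{δ→0⁺} log D(𝓛_1, δ)/log δ⁻¹. -/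
open scoped ENNReal

/-- The metric dimension `Mdim_L = limsup_{δ → 0⁺} log D(𝓛₁, δ) / log δ⁻¹`. -/
noncomputable def mdim {E : Type*} [NormedAddCommGroup E] [Module ℂ E]
    (U : Set E) : EReal :=
  Filter.limsup
    (fun δ : ℝ => (((Real.log δ⁻¹)⁻¹ : ℝ) : EReal) * ENNReal.log (apxDimE U δ))
    (nhdsWithin 0 (Set.Ioi 0))


/-!
The coordinate projections of `𝓛₁^{A⊕B}` lie in `𝓛₁^A` and `𝓛₁^B`, and the product of
`δ`-approximating subspaces for these is `δ`-approximating for `𝓛₁^{A⊕B}` in the max norm; since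
`D(𝓛₁^A, δ) + D(𝓛₁^B, δ) ≤ 2 max (D(𝓛₁^A, δ), D(𝓛₁^B, δ))`, this also gives `≤` for `Mdim`.
Conversely, as `L_A` is induced by `L`, for `L_A a ≤ 1` and `t < 1` the element `t a` is the
projection of an element of `𝓛₁^{A⊕B}`, so `𝓛₁^A` lies in the closure of the projection of
`𝓛₁^{A⊕B}` and `D(𝓛₁^A, δ) ≤ D(𝓛₁^{A⊕B}, δ/2)`. Neither a constant factor nor a rescaling of `δ`
changes `Mdim`, because `Mdim U ≤ c` as soon as `D(U, δ) ≤ δ^{-c}` for all small `δ`.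
-/

open Filter Topology

section ApproximateDimension

variable {E : Type*} [NormedAddCommGroup E] [Module ℂ E]
  {F : Type*} [NormedAddCommGroup F] [Module ℂ F]

lemma apxDimE_le_finrank {Z : Set E} {δ : ℝ} (Y : Submodule ℂ E) [FiniteDimensional ℂ Y]
    (hY : ∀ z ∈ Z, ∃ y ∈ Y, ‖z - y‖ < δ) : apxDimE Z δ ≤ Module.finrank ℂ Y :=
  sInf_le ⟨Y, inferInstance, rfl, hY⟩

lemma apxDimE_le_add_of_subset_prod {W : Set (E × F)} {U : Set E} {V : Set F}
    (hW : W ⊆ U ×ˢ V) (δ : ℝ) : apxDimE W δ ≤ apxDimE U δ + apxDimE V δ := by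
  show apxDimE W δ ≤ sInf _ + sInf _
  rw [sInf_eq_iInf, sInf_eq_iInf]
  refine ENNReal.le_iInf₂_add_iInf₂ ?_
  rintro _ ⟨Y₁, _, rfl, hY₁⟩ _ ⟨Y₂, _, rfl, hY₂⟩
  have : FiniteDimensional ℂ (Y₁.prod Y₂) := by rw [LinearMap.prod_eq_sup_map]; infer_instance
  calc apxDimE W δ ≤ Module.finrank ℂ (Y₁.prod Y₂) := apxDimE_le_finrank _ ?_
    _ ≤ Module.finrank ℂ Y₁ + Module.finrank ℂ Y₂ := by
      rw [LinearMap.prod_eq_sup_map]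
      exact_mod_cast (Submodule.finrank_add_le_finrank_add_finrank _ _).trans
        (add_le_add (Submodule.finrank_map_le _ _) (Submodule.finrank_map_le _ _))
  rintro ⟨a, b⟩ hab
  obtain ⟨y₁, hy₁, ha⟩ := hY₁ a (hW hab).1
  obtain ⟨y₂, hy₂, hb⟩ := hY₂ b (hW hab).2
  exact ⟨(y₁, y₂), ⟨hy₁, hy₂⟩, max_lt ha hb⟩

lemma apxDimE_le_of_subset_closure_image (π : E →ₗ[ℂ] F) (hπ : ∀ x, ‖π x‖ ≤ ‖x‖)
    {P : Set E} {U : Set F} (hU : U ⊆ closure (π '' P)) {δ δ' : ℝ} (hδ : δ' < δ) :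
    apxDimE U δ ≤ apxDimE P δ' := by
  refine le_sInf ?_
  rintro _ ⟨Y, _, rfl, hY⟩
  refine (apxDimE_le_finrank (Y.map π) fun a ha => ?_).trans
    (by exact_mod_cast Submodule.finrank_map_le π Y)
  obtain ⟨_, ⟨z, hz, rfl⟩, haz⟩ := Metric.mem_closure_iff.1 (hU ha) (δ - δ') (by linarith)
  obtain ⟨y, hy, hzy⟩ := hY z hz
  refine ⟨π y, Submodule.mem_map_of_mem hy, ?_⟩
  calc ‖a - π y‖ ≤ ‖a - π z‖ + ‖π (z - y)‖ := by
        rw [map_sub]; exact norm_sub_le_norm_sub_add_norm_sub _ _ _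
    _ < (δ - δ') + δ' := add_lt_add_of_lt_of_le (by rwa [← dist_eq_norm]) ((hπ _).trans hzy.le)
    _ = δ := by ring

end ApproximateDimension

lemma inv_log_inv_mul_log_le_iff {δ : ℝ} (hδ₀ : 0 < δ) (hδ₁ : δ < 1) (c : ℝ) (D : ℝ≥0∞) :
    (((Real.log δ⁻¹)⁻¹ : ℝ) : EReal) * ENNReal.log D ≤ c ↔ D ≤ ENNReal.ofReal (δ ^ (-c)) := by
  have ha : 0 < Real.log δ⁻¹ := Real.log_pos ((one_lt_inv₀ hδ₀).2 hδ₁)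
  rw [EReal.coe_inv, ← EReal.div_eq_inv_mul, EReal.div_le_iff_le_mul (by exact_mod_cast ha)
    (EReal.coe_ne_top _), ← ENNReal.log_le_log_iff,
    ENNReal.log_ofReal_of_pos (Real.rpow_pos_of_pos hδ₀ _), Real.log_rpow hδ₀, Real.log_inv,
    ← EReal.coe_mul]
  ring_nf

lemma eventually_mul_rpow_neg_le (K : ℝ) {c' c : ℝ} (h : c' < c) :
    ∀ᶠ δ in 𝓝[>] 0, K * δ ^ (-c') ≤ δ ^ (-c) := by
  filter_upwards [(tendsto_rpow_neg_nhdsGT_zero (by linarith : c' - c < 0)).eventually_ge_atTop K,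
    self_mem_nhdsWithin] with δ hK hδ
  calc K * δ ^ (-c') ≤ δ ^ (c' - c) * δ ^ (-c') :=
        mul_le_mul_of_nonneg_right hK (Real.rpow_nonneg (le_of_lt hδ) _)
    _ = δ ^ (-c) := by rw [← Real.rpow_add hδ]; ring_nf

section MetricDimension

variable {E : Type*} [NormedAddCommGroup E] [Module ℂ E]
  {F : Type*} [NormedAddCommGroup F] [Module ℂ F]
  {G : Type*} [NormedAddCommGroup G] [Module ℂ G]

lemma mdim_le_of_eventually_le_rpow {U : Set E} {c : ℝ}
    (h : ∀ᶠ δ in 𝓝[>] 0, apxDimE U δ ≤ ENNReal.ofReal (δ ^ (-c))) : mdim U ≤ c := by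
  refine limsup_le_of_le (by isBoundedDefault) ?_
  filter_upwards [h, Ioo_mem_nhdsGT one_pos] with δ hδ ⟨hδ₀, hδ₁⟩
  exact (inv_log_inv_mul_log_le_iff hδ₀ hδ₁ c _).2 hδ

lemma eventually_le_rpow_of_mdim_lt {U : Set E} {c : ℝ} (h : mdim U < c) :
    ∀ᶠ δ in 𝓝[>] 0, apxDimE U δ ≤ ENNReal.ofReal (δ ^ (-c)) := by
  filter_upwards [eventually_lt_of_limsup_lt h, Ioo_mem_nhdsGT one_pos] with δ hδ ⟨hδ₀, hδ₁⟩
  exact (inv_log_inv_mul_log_le_iff hδ₀ hδ₁ c _).1 hδ.le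

lemma mdim_le_of_eventually_apxDimE_le_mul {U : Set E} {V : Set F} {r : ℝ} (hr : 0 < r)
    (h : ∀ᶠ δ in 𝓝[>] 0, apxDimE U δ ≤ apxDimE V (r * δ)) : mdim U ≤ mdim V := by
  refine EReal.le_of_forall_lt_iff_le.1 fun c hc => ?_
  obtain ⟨c', hc', hc'c⟩ := EReal.exists_between_coe_real hc
  refine mdim_le_of_eventually_le_rpow ?_
  filter_upwards [h, eventually_nhdsGT_zero_mul_left hr (eventually_le_rpow_of_mdim_lt hc'),
    eventually_mul_rpow_neg_le (r ^ (-c')) (EReal.coe_lt_coe_iff.1 hc'c),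
    self_mem_nhdsWithin] with δ hUV hV hK hδ
  calc apxDimE U δ ≤ apxDimE V (r * δ) := hUV
    _ ≤ ENNReal.ofReal ((r * δ) ^ (-c')) := hV
    _ = ENNReal.ofReal (r ^ (-c') * δ ^ (-c')) := by rw [Real.mul_rpow hr.le (le_of_lt hδ)]
    _ ≤ ENNReal.ofReal (δ ^ (-c)) := ENNReal.ofReal_le_ofReal hK

lemma mdim_le_max_of_eventually_apxDimE_le_add {W : Set G} {U : Set E} {V : Set F}
    (h : ∀ᶠ δ in 𝓝[>] 0, apxDimE W δ ≤ apxDimE U δ + apxDimE V δ) :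
    mdim W ≤ max (mdim U) (mdim V) := by
  refine EReal.le_of_forall_lt_iff_le.1 fun c hc => ?_
  obtain ⟨c', hc', hc'c⟩ := EReal.exists_between_coe_real hc
  rw [max_lt_iff] at hc'
  refine mdim_le_of_eventually_le_rpow ?_
  filter_upwards [h, eventually_le_rpow_of_mdim_lt hc'.1, eventually_le_rpow_of_mdim_lt hc'.2,
    eventually_mul_rpow_neg_le 2 (EReal.coe_lt_coe_iff.1 hc'c),
    self_mem_nhdsWithin] with δ hW hU hV hK hδ
  have hpos : 0 ≤ δ ^ (-c') := Real.rpow_nonneg (le_of_lt hδ) _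
  calc apxDimE W δ ≤ apxDimE U δ + apxDimE V δ := hW
    _ ≤ ENNReal.ofReal (δ ^ (-c')) + ENNReal.ofReal (δ ^ (-c')) := add_le_add hU hV
    _ = ENNReal.ofReal (2 * δ ^ (-c')) := by rw [← ENNReal.ofReal_add hpos hpos, two_mul]
    _ ≤ ENNReal.ofReal (δ ^ (-c)) := ENNReal.ofReal_le_ofReal hK

end MetricDimension

lemma subset_closure_of_lt_one {E : Type*} [NormedAddCommGroup E] [NormedSpace ℂ E]
    {L : E → ℝ≥0∞} (hL : ∀ (c : ℂ) (a : E), L (c • a) = ‖c‖₊ * L a) {S : Set E}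
    (hS : ∀ a, L a < 1 → a ∈ S) : {a | L a ≤ 1} ⊆ closure S := by
  intro a ha
  have hlim : Tendsto (fun t : ℝ => (t : ℂ) • a) (𝓝[<] 1) (𝓝 a) := by
    have hcont : Continuous fun t : ℝ => (t : ℂ) • a :=
      Complex.continuous_ofReal.smul continuous_const
    simpa using (hcont.tendsto 1).mono_left nhdsWithin_le_nhds
  refine mem_closure_of_tendsto hlim ?_
  filter_upwards [Ioo_mem_nhdsLT one_pos] with t ⟨ht₀, ht₁⟩
  refine hS _ ?_
  rw [hL]
  calc (‖(t : ℂ)‖₊ : ℝ≥0∞) * L a ≤ ‖(t : ℂ)‖₊ * 1 := by gcongr; exact ha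
    _ < 1 := by
      rw [mul_one, ENNReal.coe_lt_one_iff, ← NNReal.coe_lt_one, coe_nnnorm, Complex.norm_real,
        Real.norm_eq_abs, abs_lt]
      constructor <;> linarith

theorem stmt_18_general {A : Type*} [NormedRing A] [StarRing A] [NormedAlgebra ℂ A]
    {B : Type*} [NormedRing B] [StarRing B] [NormedAlgebra ℂ B]
    (L : A × B → ℝ≥0∞)
    (LA : A → ℝ≥0∞) (hLA : IsCLipNorm LA)
    (LB : B → ℝ≥0∞) (hLB : IsCLipNorm LB)
    (hindA : ∀ a : A, LA a = ⨅ b : B, L (a, b))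
    (hindB : ∀ b : B, LB b = ⨅ a : A, L (a, b)) :
    (∀ δ : ℝ, 0 < δ →
        apxDimE {x : A × B | L x ≤ 1} δ ≤
          apxDimE {a : A | LA a ≤ 1} δ + apxDimE {b : B | LB b ≤ 1} δ) ∧
    mdim {x : A × B | L x ≤ 1} =
      max (mdim {a : A | LA a ≤ 1}) (mdim {b : B | LB b ≤ 1}) := by
  have hW : {x : A × B | L x ≤ 1} ⊆ {a | LA a ≤ 1} ×ˢ {b | LB b ≤ 1} := fun x hx =>
    ⟨(hindA x.1).trans_le ((iInf_le _ x.2).trans hx),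
      (hindB x.2).trans_le ((iInf_le _ x.1).trans hx)⟩
  have hA : {a | LA a ≤ 1} ⊆ closure (Prod.fst '' {x : A × B | L x ≤ 1}) :=
    subset_closure_of_lt_one hLA.smul_eq fun a ha => by
      obtain ⟨b, hb⟩ := iInf_lt_iff.1 ((hindA a).symm.trans_lt ha)
      exact ⟨(a, b), hb.le, rfl⟩
  have hB : {b | LB b ≤ 1} ⊆ closure (Prod.snd '' {x : A × B | L x ≤ 1}) :=
    subset_closure_of_lt_one hLB.smul_eq fun b hb => by
      obtain ⟨a, ha⟩ := iInf_lt_iff.1 ((hindB b).symm.trans_lt hb)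
      exact ⟨(a, b), ha.le, rfl⟩
  have hhalf : ∀ᶠ δ : ℝ in 𝓝[>] 0, 2⁻¹ * δ < δ :=
    eventually_mem_nhdsWithin.mono fun δ (hδ : 0 < δ) => by linarith
  refine ⟨fun δ _ => apxDimE_le_add_of_subset_prod hW δ, le_antisymm
    (mdim_le_max_of_eventually_apxDimE_le_add (.of_forall (apxDimE_le_add_of_subset_prod hW)))
    (max_le ?_ ?_)⟩
  · exact mdim_le_of_eventually_apxDimE_le_mul (by norm_num) <| hhalf.mono fun δ =>
      apxDimE_le_of_subset_closure_image (LinearMap.fst ℂ A B) norm_fst_le hA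
  · exact mdim_le_of_eventually_apxDimE_le_mul (by norm_num) <| hhalf.mono fun δ =>
      apxDimE_le_of_subset_closure_image (LinearMap.snd ℂ A B) norm_snd_le hB

/-- Let `L` be a cLip-norm on `A ⊕ B` inducing the cLip-norms
`L_A` and `L_B` via the coordinate projections. Then for all `δ > 0`,
`D(𝓛^{A⊕B}₁, δ) ≤ D(𝓛^A₁, δ) + D(𝓛^B₁, δ)`; consequently
`Mdim_L(A ⊕ B) = max (Mdim_{L_A}(A), Mdim_{L_B}(B))`. -/
theorem stmt_18 {A : Type*} [NormedRing A] [StarRing A] [CStarRing A]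
    [NormedAlgebra ℂ A] [CompleteSpace A]
    {B : Type*} [NormedRing B] [StarRing B] [CStarRing B]
    [NormedAlgebra ℂ B] [CompleteSpace B]
    (L : A × B → ℝ≥0∞) (hL : IsCLipNorm L)
    (LA : A → ℝ≥0∞) (hLA : IsCLipNorm LA)
    (LB : B → ℝ≥0∞) (hLB : IsCLipNorm LB)
    (hindA : ∀ a : A, LA a = ⨅ b : B, L (a, b))
    (hindB : ∀ b : B, LB b = ⨅ a : A, L (a, b)) :
    (∀ δ : ℝ, 0 < δ →
        apxDimE {x : A × B | L x ≤ 1} δ ≤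
          apxDimE {a : A | LA a ≤ 1} δ + apxDimE {b : B | LB b ≤ 1} δ) ∧
    mdim {x : A × B | L x ≤ 1} =
      max (mdim {a : A | LA a ≤ 1}) (mdim {b : B | LB b ≤ 1}) :=
  stmt_18_general L LA hLA LB hLB hindA hindB
end
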